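/- Nelson residuated lattices coincide with integral Nelson-type algebras: (1) if (A,∨,∧,·,→,⊥,e) is a Nelson residuated lattice and ∼x = x→⊥, then (A,∨,∧,·,→,∼,e) is an integral Nelson-type algebra; (2) if (A,∨,∧,·,→,∼,e) is an integral Nelson-type algebra, then ⊥ = ∼e is the least element of A, ∼x = x→⊥, and (A,∨,∧,·,→,⊥,e) is a Nelson residuated lattice. -/
import Mathlib


/-- A commutative residuated lattice: a lattice with a commutative monoid
operation and a residual `arrow x z` (i.e. `x → z`) satisfying
`x * y ≤ z ↔ y ≤ x → z`. -/
class CommResiduatedLattice (α : Type*) extends Lattice α, CommMonoid α where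
  arrow : α → α → α
  arrow_adj : ∀ {x y z : α}, x * y ≤ z ↔ y ≤ arrow x z

open CommResiduatedLattice

/-- A commutative involutive residuated lattice: additionally an involution
`∼` with `∼∼x = x` and the contraposition law `x → ∼y = y → ∼x`. -/
class InvCommResiduatedLattice (α : Type*) extends CommResiduatedLattice α where
  neg : α → α
  neg_neg : ∀ x : α, neg (neg x) = x
  contra : ∀ x y : α, arrow x (neg y) = arrow y (neg x)

open InvCommResiduatedLattice

/-- A conucleus on a residuated lattice (conditions (C1)-(C5)). -/
def IsConucleus {β : Type*} [Lattice β] [Monoid β] (τ : β → β) : Prop :=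
  (∀ x, τ x ≤ x) ∧ (∀ x, τ (τ x) = τ x) ∧ (∀ x y, x ≤ y → τ x ≤ τ y) ∧
  (∀ x y, τ x * τ y ≤ τ (x * y)) ∧
  (∀ x, τ 1 * τ x = τ x) ∧ (∀ x, τ x * τ 1 = τ x)

/-- A Nelson conucleus: a conucleus additionally satisfying
(T1) `τ(x∨y) = τx ∨ τy`, (T2) `τ(x·y) = τx·τy`, and
(T3) `x·y ≤ τx·y ∨ x·τy`. -/
def IsNelsonConucleus {β : Type*} [Lattice β] [Monoid β] (τ : β → β) : Prop :=
  IsConucleus τ ∧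
  (∀ x y, τ (x ⊔ y) = τ x ⊔ τ y) ∧
  (∀ x y, τ (x * y) = τ x * τ y) ∧
  (∀ x y, x * y ≤ τ x * y ⊔ x * τ y)

section Aux
variable {α : Type*} [CommResiduatedLattice α]

lemma crl_mul_le_left_mono {a b : α} (c : α) (h : a ≤ b) : c * a ≤ c * b :=
  arrow_adj.mpr (le_trans h (arrow_adj.mp (le_refl (c * b))))

lemma crl_mul_le_mul {a b c d : α} (h1 : a ≤ b) (h2 : c ≤ d) : a * c ≤ b * d := by
  calc a * c = c * a := mul_comm _ _
    _ ≤ c * b := crl_mul_le_left_mono c h1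
    _ = b * c := mul_comm _ _
    _ ≤ b * d := crl_mul_le_left_mono b h2

lemma crl_mul_arrow_le {x y : α} : x * arrow x y ≤ y := arrow_adj.mpr le_rfl

lemma crl_arrow_anti {a b z : α} (h : a ≤ b) : arrow b z ≤ arrow a z :=
  arrow_adj.mp (le_trans (crl_mul_le_mul h le_rfl) crl_mul_arrow_le)

lemma crl_one_arrow (x : α) : arrow 1 x = x :=
  le_antisymm (by simpa using crl_mul_arrow_le (x := (1:α)) (y := x))
    (arrow_adj.mp (le_of_eq (one_mul x)))

lemma crl_mul_sup (a b c : α) : a * (b ⊔ c) = a * b ⊔ a * c :=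
  le_antisymm
    (arrow_adj.mpr (sup_le (arrow_adj.mp le_sup_left) (arrow_adj.mp le_sup_right)))
    (sup_le (crl_mul_le_left_mono a le_sup_left) (crl_mul_le_left_mono a le_sup_right))

lemma crl_sup_arrow (u v w : α) : arrow (u ⊔ v) w = arrow u w ⊓ arrow v w := by
  apply le_antisymm
  · exact le_inf (crl_arrow_anti le_sup_left) (crl_arrow_anti le_sup_right)
  · refine arrow_adj.mp ?_
    rw [mul_comm, crl_mul_sup]
    refine sup_le ?_ ?_
    · exact le_trans (crl_mul_le_mul inf_le_left le_rfl)
        (by rw [mul_comm]; exact crl_mul_arrow_le)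
    · exact le_trans (crl_mul_le_mul inf_le_right le_rfl)
        (by rw [mul_comm]; exact crl_mul_arrow_le)

lemma crl_curry (a b c : α) : arrow (a * b) c = arrow a (arrow b c) := by
  apply le_antisymm
  · refine arrow_adj.mp (arrow_adj.mp ?_)
    calc b * (a * arrow (a * b) c) = (a * b) * arrow (a * b) c := by
          rw [← mul_assoc, mul_comm b a]
      _ ≤ c := crl_mul_arrow_le
  · refine arrow_adj.mp ?_
    calc (a * b) * arrow a (arrow b c) = b * (a * arrow a (arrow b c)) := by
          rw [← mul_assoc, mul_comm b a]
      _ ≤ b * arrow b c := crl_mul_le_left_mono b crl_mul_arrow_le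
      _ ≤ c := crl_mul_arrow_le

lemma crl_contra (u v w : α) : arrow u (arrow v w) = arrow v (arrow u w) := by
  rw [← crl_curry, mul_comm, crl_curry]

lemma crl_one_le {a b : α} (h : a ≤ b) : (1 : α) ≤ arrow a b :=
  arrow_adj.mp ((le_of_eq (mul_one a)).trans h)

lemma crl_le_of_one {a b : α} (h : (1 : α) ≤ arrow a b) : a ≤ b :=
  (le_of_eq (mul_one a).symm).trans (arrow_adj.mpr h)

/-- Part 1 core: under integrality, double negation and (NRL2), the lattice is
distributive and the integral form of (N1) holds. -/
lemma crl_part1 (bot : α) (hint : ∀ x : α, x ≤ 1)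
    (hdn : ∀ x : α, arrow (arrow x bot) bot = x)
    (hN : ∀ x y : α, arrow (x * x) y ⊓
        arrow ((arrow y bot) * (arrow y bot)) (arrow x bot) = arrow x y) :
    (∀ x y z : α, x ⊓ (y ⊔ z) = (x ⊓ y) ⊔ (x ⊓ z)) ∧
    (∀ x y : α, x * y = (x * x) * y ⊔ x * (y * y)) := by
  have hle1 : ∀ a c : α, a * c ≤ a := fun a c =>
    le_trans (crl_mul_le_left_mono a (hint c)) (le_of_eq (mul_one a))
  have hle2 : ∀ a c : α, a * c ≤ c := fun a c => by
    rw [mul_comm]; exact hle1 c a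
  have hneg_inj : ∀ u v : α, arrow u bot = arrow v bot → u = v := by
    intro u v h; rw [← hdn u, ← hdn v, h]
  have hN1 : ∀ a c : α, a * c = (a * a) * c ⊔ a * (c * c) := by
    intro a c
    apply hneg_inj
    rw [crl_sup_arrow, crl_curry (a*a) c bot, crl_curry a (c*c) bot, crl_curry a c bot,
      crl_contra a (c*c) bot]
    have h := hN a (arrow c bot)
    rw [hdn c] at h
    exact h.symm
  have hcube : ∀ a : α, (a * a) * a = a * a := by
    intro a
    have h := hN1 a a
    rw [← mul_assoc, sup_idem] at h
    exact h.symm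
  have hidem : ∀ a : α, (a * a) * (a * a) = a * a := by
    intro a
    rw [← mul_assoc, hcube, hcube]
  have hT1 : ∀ a c : α, (a ⊔ c) * (a ⊔ c) = a * a ⊔ c * c := by
    intro a c
    apply le_antisymm
    · have hac : a * c ≤ a * a ⊔ c * c := by
        rw [hN1 a c]
        exact sup_le (le_trans (hle1 _ _) le_sup_left) (le_trans (hle2 _ _) le_sup_right)
      rw [crl_mul_sup, mul_comm (a ⊔ c) a, mul_comm (a ⊔ c) c, crl_mul_sup, crl_mul_sup]
      exact sup_le (sup_le le_sup_left hac)
        (sup_le (by rw [mul_comm]; exact hac) le_sup_right)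
    · exact sup_le (crl_mul_le_mul le_sup_left le_sup_left)
        (crl_mul_le_mul le_sup_right le_sup_right)
  have hK : ∀ a c : α, (a ⊓ c) * (a ⊓ c) ≤ (a * a) * (c * c) := by
    intro a c
    have h1 : (a ⊓ c) * (a ⊓ c) ≤ a * c := crl_mul_le_mul inf_le_left inf_le_right
    have h2 : (a ⊓ c) * (a ⊓ c) ≤ ((a ⊓ c) * (a ⊓ c)) * (a * c) := by
      calc (a ⊓ c) * (a ⊓ c) = ((a ⊓ c) * (a ⊓ c)) * ((a ⊓ c) * (a ⊓ c)) := (hidem _).symm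
        _ ≤ ((a ⊓ c) * (a ⊓ c)) * (a * c) := crl_mul_le_left_mono _ h1
    calc (a ⊓ c) * (a ⊓ c) = ((a ⊓ c) * (a ⊓ c)) * ((a ⊓ c) * (a ⊓ c)) := (hidem _).symm
      _ ≤ (((a ⊓ c) * (a ⊓ c)) * (a * c)) * (((a ⊓ c) * (a ⊓ c)) * (a * c)) :=
          crl_mul_le_mul h2 h2
      _ = (((a ⊓ c) * (a ⊓ c)) * ((a ⊓ c) * (a ⊓ c))) * ((a * a) * (c * c)) := by
          rw [mul_mul_mul_comm ((a ⊓ c) * (a ⊓ c)) (a * c) ((a ⊓ c) * (a ⊓ c)) (a * c),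
            mul_mul_mul_comm a c a c]
      _ = ((a ⊓ c) * (a ⊓ c)) * ((a * a) * (c * c)) := by rw [hidem]
      _ ≤ 1 * ((a * a) * (c * c)) := crl_mul_le_mul (hint _) le_rfl
      _ = (a * a) * (c * c) := one_mul _
  have hKrev : ∀ a c : α, (a * a) * (c * c) ≤ (a ⊓ c) * (a ⊓ c) := by
    intro a c
    have hle : (a * a) * (c * c) ≤ a ⊓ c :=
      le_inf (le_trans (hle1 _ _) (hle1 a a)) (le_trans (hle2 _ _) (hle2 c c))
    calc (a * a) * (c * c) = ((a * a) * (a * a)) * ((c * c) * (c * c)) := by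
          rw [hidem, hidem]
      _ = ((a * a) * (c * c)) * ((a * a) * (c * c)) := mul_mul_mul_comm _ _ _ _
      _ ≤ (a ⊓ c) * (a ⊓ c) := crl_mul_le_mul hle hle
  have hdm' : ∀ u v : α, arrow (u ⊓ v) bot = arrow u bot ⊔ arrow v bot := by
    intro u v
    have h : u ⊓ v = arrow (arrow u bot ⊔ arrow v bot) bot := by
      rw [crl_sup_arrow, hdn, hdn]
    rw [h, hdn]
  have hreflect : ∀ x y : α, x * x ≤ y →
      (arrow y bot) * (arrow y bot) ≤ arrow x bot → x ≤ y := by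
    intro x y h1 h2
    apply crl_le_of_one
    rw [← hN x y]
    exact le_inf (crl_one_le h1) (crl_one_le h2)
  refine ⟨?_, hN1⟩
  intro x y z
  apply le_antisymm
  · apply hreflect
    · calc (x ⊓ (y ⊔ z)) * (x ⊓ (y ⊔ z)) ≤ (x * x) * ((y ⊔ z) * (y ⊔ z)) := hK _ _
        _ = (x * x) * (y * y ⊔ z * z) := by rw [hT1]
        _ = (x * x) * (y * y) ⊔ (x * x) * (z * z) := crl_mul_sup _ _ _
        _ ≤ (x ⊓ y) * (x ⊓ y) ⊔ (x ⊓ z) * (x ⊓ z) := sup_le_sup (hKrev _ _) (hKrev _ _)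
        _ ≤ (x ⊓ y) ⊔ (x ⊓ z) := sup_le_sup (hle1 _ _) (hle1 _ _)
    · rw [crl_sup_arrow, hdm', hdm', hdm', crl_sup_arrow]
      calc ((arrow x bot ⊔ arrow y bot) ⊓ (arrow x bot ⊔ arrow z bot)) *
            ((arrow x bot ⊔ arrow y bot) ⊓ (arrow x bot ⊔ arrow z bot))
          ≤ ((arrow x bot ⊔ arrow y bot) * (arrow x bot ⊔ arrow y bot)) *
            ((arrow x bot ⊔ arrow z bot) * (arrow x bot ⊔ arrow z bot)) := hK _ _
        _ = (arrow x bot * arrow x bot ⊔ arrow y bot * arrow y bot) *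
            (arrow x bot * arrow x bot ⊔ arrow z bot * arrow z bot) := by rw [hT1, hT1]
        _ = (arrow x bot * arrow x bot ⊔ arrow y bot * arrow y bot) *
              (arrow x bot * arrow x bot) ⊔
            (arrow x bot * arrow x bot ⊔ arrow y bot * arrow y bot) *
              (arrow z bot * arrow z bot) := crl_mul_sup _ _ _
        _ ≤ arrow x bot ⊔ (arrow y bot ⊓ arrow z bot) := by
            refine sup_le (le_trans (hle2 _ _) (le_trans (hle1 _ _) le_sup_left)) ?_
            rw [mul_comm, crl_mul_sup]
            refine sup_le (le_trans (hle2 _ _) (le_trans (hle1 _ _) le_sup_left)) ?_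
            refine le_trans ?_ le_sup_right
            exact le_inf (le_trans (hle2 _ _) (hle1 _ _)) (le_trans (hle1 _ _) (hle1 _ _))
  · exact sup_le (le_inf inf_le_left (le_trans inf_le_right le_sup_left))
      (le_inf inf_le_left (le_trans inf_le_right le_sup_right))

end Aux

/-- Nelson residuated lattices coincide with integral
Nelson-type algebras. (1) If `(A,∨,∧,·,→,⊥,e)` is a Nelson residuated
lattice (bounded, integral, commutative, satisfying (NRL1) and (NRL2) for
`¬x = x→⊥`) then, with `∼x = x→⊥`, `A` is an integral Nelson-type algebra:
`∼` is an involution satisfying contraposition, and `A` is distributive and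
satisfies (N1) and (N2). (2) If `(A,∨,∧,·,→,∼,e)` is an integral
Nelson-type algebra then `⊥ = ∼e` is the least element, `∼x = x→⊥`, and
`(A,∨,∧,·,→,⊥,e)` satisfies (NRL1) and (NRL2). -/
theorem nelson_residuated_iff_integral_nelson_type {α : Type*}
    [CommResiduatedLattice α] :
    -- (1)
    (∀ bot : α, (∀ x : α, bot ≤ x) → (∀ x : α, x ≤ 1) →
      (∀ x : α, arrow (arrow x bot) bot = x) →
      (∀ x y : α, arrow (x * x) y ⊓
          arrow ((arrow y bot) * (arrow y bot)) (arrow x bot) = arrow x y) →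
      ((∀ x : α, arrow (arrow x bot) bot = x) ∧
       (∀ x y : α, arrow x (arrow y bot) = arrow y (arrow x bot)) ∧
       (∀ x y z : α, x ⊓ (y ⊔ z) = (x ⊓ y) ⊔ (x ⊓ z)) ∧
       (∀ x y : α, x * y = ((x ⊓ 1) * (x ⊓ 1)) * y ⊔ x * ((y ⊓ 1) * (y ⊓ 1))) ∧
       (∀ x y : α, ((x * y) ⊓ 1) * ((x * y) ⊓ 1) =
          ((x ⊓ 1) * (x ⊓ 1)) * ((y ⊓ 1) * (y ⊓ 1))))) ∧
    -- (2)
    (∀ neg : α → α, (∀ x : α, neg (neg x) = x) →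
      (∀ x y : α, arrow x (neg y) = arrow y (neg x)) →
      (∀ x y z : α, x ⊓ (y ⊔ z) = (x ⊓ y) ⊔ (x ⊓ z)) →
      (∀ x y : α, x * y = ((x ⊓ 1) * (x ⊓ 1)) * y ⊔ x * ((y ⊓ 1) * (y ⊓ 1))) →
      (∀ x y : α, ((x * y) ⊓ 1) * ((x * y) ⊓ 1) =
          ((x ⊓ 1) * (x ⊓ 1)) * ((y ⊓ 1) * (y ⊓ 1))) →
      (∀ x : α, x ≤ 1) →
      ((∀ x : α, neg 1 ≤ x) ∧
       (∀ x : α, neg x = arrow x (neg 1)) ∧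
       (∀ x : α, arrow (arrow x (neg 1)) (neg 1) = x) ∧
       (∀ x y : α, arrow (x * x) y ⊓
          arrow ((arrow y (neg 1)) * (arrow y (neg 1))) (arrow x (neg 1)) =
          arrow x y))) := by
  constructor
  · -- Part (1)
    intro bot _hbot hint hdn hN
    obtain ⟨hdist, hN1⟩ := crl_part1 bot hint hdn hN
    refine ⟨hdn, fun x y => crl_contra x y bot, hdist, ?_, ?_⟩
    · intro x y
      rw [inf_eq_left.mpr (hint x), inf_eq_left.mpr (hint y)]
      exact hN1 x y
    · intro x y
      rw [inf_eq_left.mpr (hint (x * y)), inf_eq_left.mpr (hint x),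
        inf_eq_left.mpr (hint y)]
      exact mul_mul_mul_comm x y x y
  · -- Part (2)
    intro neg hinv hcon _hdist hN1 _hN2 hint
    have hnegdef : ∀ x : α, neg x = arrow x (neg 1) := fun x =>
      ((hcon x 1).trans (crl_one_arrow (neg x))).symm
    have hanti : ∀ a b : α, a ≤ b → neg b ≤ neg a := by
      intro a b h
      rw [hnegdef a, hnegdef b]
      exact crl_arrow_anti h
    have hleast : ∀ x : α, neg 1 ≤ x := by
      intro x
      have h := hanti (neg x) 1 (hint (neg x))
      rwa [hinv x] at h
    have hdn : ∀ x : α, arrow (arrow x (neg 1)) (neg 1) = x := by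
      intro x
      rw [← hnegdef x, ← hnegdef (neg x), hinv]
    have hN1' : ∀ a c : α, a * c = (a * a) * c ⊔ a * (c * c) := by
      intro a c
      have h := hN1 a c
      rwa [inf_eq_left.mpr (hint a), inf_eq_left.mpr (hint c)] at h
    refine ⟨hleast, hnegdef, hdn, ?_⟩
    intro x y
    have h1 : arrow ((x * x) * arrow y (neg 1)) (neg 1) = arrow (x * x) y := by
      rw [crl_curry, hdn]
    have h2 : arrow (x * (arrow y (neg 1) * arrow y (neg 1))) (neg 1)
        = arrow (arrow y (neg 1) * arrow y (neg 1)) (arrow x (neg 1)) := by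
      rw [crl_curry, crl_contra x (arrow y (neg 1) * arrow y (neg 1)) (neg 1)]
    have h3 : arrow (x * arrow y (neg 1)) (neg 1) = arrow x y := by
      rw [crl_curry, hdn]
    rw [← h1, ← h2, ← h3, ← crl_sup_arrow, ← hN1' x (arrow y (neg 1))]
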